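/- arXiv:2104.06610 — 4 statements merged into one kernel-verified Lean document; each statement's English description precedes it below -/
import Mathlib

section
/- Assume R₀ := λK/μ > 1 and θ > θ₁, where θ₁ := d + λad(r + λK)/(r(λK − μ)). Define Y* := ad/(θ − d), X* := K − (1 + λK/r)·Y*, and Z* := (a + Y*)(λX* − μ)/m. Then Y* > 0, λX* > μ (hence X* > 0), and Z* > 0; thus the interior fixed point E* = (X*, Y*, Z*) exists with all components positive. -/
/-!
With `c = λ(r + λK)/r` one has `λX* − μ = (λK − μ) − c Y*`, so `λX* > μ` means `c Y* < λK − μ`.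
As `Y* = ad/(θ − d)` and `θ₁ − d = c·ad/(λK − μ)`, this inequality is a rearrangement of `θ > θ₁`,
once `R₀ > 1` has made `λK − μ` positive. Positivity of `X*` and `Z*` then follows from that of
`λX* − μ` and `Y*`.
-/

lemma lam_mul_sub_mul_sub_eq {r K lam mu Y : ℝ} (hr : r ≠ 0) :
    lam * (K - (1 + lam * K / r) * Y) - mu = (lam * K - mu) - lam * (r + lam * K) / r * Y := by
  field_simp
  ring

theorem interior_fixed_point_existence_general
    (r K lam m mu a th d : ℝ)
    (hr : 0 < r) (hlam : 0 < lam) (hm : 0 < m) (hmu : 0 < mu)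
    (ha : 0 < a) (hd : 0 < d)
    (hR0 : 1 < lam * K / mu)
    (hθ : th > d + lam * a * d * (r + lam * K) / (r * (lam * K - mu))) :
    0 < a * d / (th - d) ∧
    mu < lam * (K - (1 + lam * K / r) * (a * d / (th - d))) ∧
    0 < K - (1 + lam * K / r) * (a * d / (th - d)) ∧
    0 < (a + a * d / (th - d)) *
        (lam * (K - (1 + lam * K / r) * (a * d / (th - d))) - mu) / m := by
  have hD : 0 < lam * K - mu := sub_pos.mpr ((one_lt_div hmu).mp hR0)
  have hlamK : 0 < lam * K := hmu.trans (sub_pos.mp hD)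
  have hθ₁ : lam * a * d * (r + lam * K) / (r * (lam * K - mu)) =
      lam * (r + lam * K) / r * (a * d) / (lam * K - mu) := by
    field_simp
  rw [hθ₁] at hθ
  have hs : 0 < th - d := by
    have : 0 < lam * (r + lam * K) / r * (a * d) / (lam * K - mu) := by positivity
    linarith
  have hY : 0 < a * d / (th - d) := by positivity
  have hmargin : 0 < lam * (K - (1 + lam * K / r) * (a * d / (th - d))) - mu := by
    rw [lam_mul_sub_mul_sub_eq hr.ne', sub_pos, ← mul_div_assoc, div_lt_comm₀ hs hD]
    linarith
  have hX : 0 < K - (1 + lam * K / r) * (a * d / (th - d)) :=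
    pos_of_mul_pos_right (hmu.trans (sub_pos.mp hmargin)) hlam.le
  exact ⟨hY, sub_pos.mp hmargin, hX, div_pos (mul_pos (by positivity) hmargin) hm⟩

/-- Existence of the interior fixed point `E* = (X*, Y*, Z*)`: if
`R₀ = λK/μ > 1` and `θ > θ₁ = d + λad(r + λK)/(r(λK − μ))`, then with
`Y* = ad/(θ − d)`, `X* = K − (1 + λK/r)Y*`, `Z* = (a + Y*)(λX* − μ)/m`
one has `Y* > 0`, `λX* > μ` (hence `X* > 0`) and `Z* > 0`. -/
theorem interior_fixed_point_existence
    (r K lam m mu a th d : ℝ)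
    (hr : 0 < r) (hK : 0 < K) (hlam : 0 < lam) (hm : 0 < m) (hmu : 0 < mu)
    (ha : 0 < a) (hth : 0 < th) (hd : 0 < d)
    (hR0 : 1 < lam * K / mu)
    (hθ : th > d + lam * a * d * (r + lam * K) / (r * (lam * K - mu))) :
    0 < a * d / (th - d) ∧
    mu < lam * (K - (1 + lam * K / r) * (a * d / (th - d))) ∧
    0 < K - (1 + lam * K / r) * (a * d / (th - d)) ∧
    0 < (a + a * d / (th - d)) *
        (lam * (K - (1 + lam * K / r) * (a * d / (th - d))) - mu) / m :=
  interior_fixed_point_existence_general r K lam m mu a th d hr hlam hm hmu ha hd hR0 hθ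
end

section
/- Suppose λK < μ (i.e., R₀ := λK/μ < 1) and s < min{s₂, s₃, s₄}, where s₂ := (2αΓ(α)/d)^{1/α}, s₃ := (2αΓ(α)/r)^{1/α}, and s₄ := (2αΓ(α)/(μ − λK))^{1/α}. Then the three eigenvalues ξ₁ = 1 − h·r, ξ₂ = 1 + h·(λK − μ), ξ₃ = 1 − h·d of the (upper-triangular) Jacobian matrix J(E₁) at the axial fixed point E₁ = (K, 0, 0) all satisfy |ξᵢ| < 1 (i = 1, 2, 3); hence E₁ is locally asymptotically stable. -/
open Real

/-! Each eigenvalue has the form `1 - h c` with `c > 0`, and `|1 - h c| < 1` amounts to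
`0 < h c < 2`. Raising `s < (2αΓ(α)/c)^{1/α}` to the power `α` gives `s^α < 2αΓ(α)/c`,
which is exactly `h c < 2`. -/

lemma rpow_mul_lt_of_lt_div_rpow_one_div {α s c B : ℝ} (hα : 0 < α) (hs : 0 ≤ s)
    (hc : 0 < c) (hB : 0 ≤ B) (hsc : s < (B / c) ^ (1 / α)) : s ^ α * c < B := by
  rw [one_div, Real.lt_rpow_inv_iff_of_pos hs (by positivity) hα] at hsc
  exact (lt_div_iff₀ hc).mp hsc

lemma abs_one_sub_step_mul_lt_one {α s c : ℝ} (hα : 0 < α) (hs : 0 < s) (hc : 0 < c)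
    (hsc : s < (2 * α * Gamma α / c) ^ (1 / α)) :
    |1 - s ^ α / (α * Gamma α) * c| < 1 := by
  have hαΓ : 0 < α * Gamma α := mul_pos hα (Gamma_pos_of_pos hα)
  have hpos : 0 < s ^ α / (α * Gamma α) * c := by positivity
  have hlt : s ^ α / (α * Gamma α) * c < 2 := by
    have := rpow_mul_lt_of_lt_div_rpow_one_div hα hs.le hc (by positivity) hsc
    rw [div_mul_eq_mul_div, div_lt_iff₀ hαΓ]
    linarith
  exact abs_sub_lt_iff.mpr ⟨by linarith, by linarith⟩

theorem E1_locally_asymptotically_stable_general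
    (r K lam mu d α s h : ℝ)
    (hr : 0 < r) (hd : 0 < d)
    (hα0 : 0 < α) (hs : 0 < s)
    (hh : h = s ^ α / (α * Real.Gamma α))
    (hR0 : lam * K < mu)
    (hsb : s < min ((2 * α * Real.Gamma α / d) ^ (1 / α))
        (min ((2 * α * Real.Gamma α / r) ^ (1 / α))
          ((2 * α * Real.Gamma α / (mu - lam * K)) ^ (1 / α)))) :
    |1 - h * r| < 1 ∧ |1 + h * (lam * K - mu)| < 1 ∧ |1 - h * d| < 1 := by
  obtain ⟨hsd, hsr, hsμ⟩ : _ ∧ _ ∧ _ := by simpa only [lt_min_iff] using hsb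
  subst hh
  refine ⟨abs_one_sub_step_mul_lt_one hα0 hs hr hsr, ?_,
    abs_one_sub_step_mul_lt_one hα0 hs hd hsd⟩
  rw [show lam * K - mu = -(mu - lam * K) by ring, mul_neg, ← sub_eq_add_neg]
  exact abs_one_sub_step_mul_lt_one hα0 hs (sub_pos.mpr hR0) hsμ

/-- Local asymptotic stability of the axial fixed point `E₁ = (K,0,0)`:
if `λK < μ` (i.e. `R₀ < 1`) and `s < min{s₂, s₃, s₄}` where
`s₂ = (2αΓ(α)/d)^{1/α}`, `s₃ = (2αΓ(α)/r)^{1/α}`,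
`s₄ = (2αΓ(α)/(μ − λK))^{1/α}`, then the three eigenvalues
`ξ₁ = 1 − hr`, `ξ₂ = 1 + h(λK − μ)`, `ξ₃ = 1 − hd` of the Jacobian `J(E₁)`
all satisfy `|ξᵢ| < 1`. -/
theorem E1_locally_asymptotically_stable
    (r K lam m mu a th d α s h : ℝ)
    (hr : 0 < r) (hK : 0 < K) (hlam : 0 < lam) (hm : 0 < m) (hmu : 0 < mu)
    (ha : 0 < a) (hth : 0 < th) (hd : 0 < d)
    (hα0 : 0 < α) (hα1 : α ≤ 1) (hs : 0 < s)
    (hh : h = s ^ α / (α * Real.Gamma α))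
    (hR0 : lam * K < mu)
    (hsb : s < min ((2 * α * Real.Gamma α / d) ^ (1 / α))
        (min ((2 * α * Real.Gamma α / r) ^ (1 / α))
          ((2 * α * Real.Gamma α / (mu - lam * K)) ^ (1 / α)))) :
    |1 - h * r| < 1 ∧ |1 + h * (lam * K - mu)| < 1 ∧ |1 - h * d| < 1 :=
  E1_locally_asymptotically_stable_general r K lam mu d α s h hr hd hα0 hs hh hR0 hsb
end

section
/- Assume λK > μ. Define A := h·rμ/(λK) − 1 and B := h²·rμ(λK − μ)/(λK). If s₅ < s < s₇, where s₅ := (αΓ(α)/(λK − μ))^{1/α} and s₇ := (λK(αΓ(α))²/(μr(λK − μ)))^{1/(2α)} (equivalently, h·(λK − μ) > 1 and h²·rμ(λK − μ)/(λK) < 1), then both complex roots ξ of ξ² + Aξ + B = 0 satisfy |ξ| < 1. -/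
/-! Both conditions on `s` are thresholds on `h`: `s₅ < s` says `h (λK − μ) > 1` and `s < s₇` says
`B < 1`. Writing `c = h r μ / (λK) > 0`, we have `A = c − 1` and `B = c · h (λK − μ) > c`, so
`|A| < 1 + B`. The Jury conditions `B < 1`, `|A| < 1 + B` then place both roots in the unit disk:
a non-real root ξ has `|ξ|² = B` (it is conjugate to the other root), and a real root outside
`(−1, 1)` would force the other real root outside as well, making their product `B` at least `1`. -/

open Complex

lemma abs_lt_one_of_quadratic_root {A B x : ℝ} (hB : B < 1) (hAB : |A| < 1 + B)
    (hx : x ^ 2 + A * x + B = 0) : |x| < 1 := by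
  obtain ⟨hA₁, hA₂⟩ := abs_lt.1 hAB
  refine abs_lt.2 ⟨?_, ?_⟩ <;> by_contra! hx₁
  · nlinarith
  · nlinarith

lemma Complex.im_eq_zero_or_normSq_eq_of_quadratic_root {A B : ℝ} {ξ : ℂ}
    (hξ : ξ ^ 2 + A * ξ + B = 0) : ξ.im = 0 ∨ normSq ξ = B := by
  have hre := congrArg re hξ
  have him := congrArg im hξ
  simp only [sq, add_re, mul_re, ofReal_re, ofReal_im, add_im, mul_im, zero_re, zero_im] at hre him
  rcases mul_eq_zero.1 (show ξ.im * (2 * ξ.re + A) = 0 by linarith) with h | h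
  · exact .inl h
  · right
    rw [normSq_apply]
    linear_combination -hre + ξ.re * h

lemma Complex.norm_lt_one_of_quadratic_root {A B : ℝ} {ξ : ℂ} (hB : B < 1) (hAB : |A| < 1 + B)
    (hξ : ξ ^ 2 + A * ξ + B = 0) : ‖ξ‖ < 1 := by
  rcases im_eq_zero_or_normSq_eq_of_quadratic_root hξ with h | h
  · obtain ⟨x, rfl⟩ : ∃ x : ℝ, (x : ℂ) = ξ := ⟨ξ.re, ext rfl h.symm⟩
    rw [norm_real, Real.norm_eq_abs]
    exact abs_lt_one_of_quadratic_root hB hAB (by exact_mod_cast hξ)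
  · rw [← sq_lt_one_iff₀ (norm_nonneg ξ), Complex.sq_norm, h]
    exact hB

lemma one_lt_div_mul_of_rpow_one_div_lt {g D α s : ℝ} (hg : 0 < g) (hD : 0 < D) (hα : 0 < α)
    (hs : 0 ≤ s) (h : (g / D) ^ (1 / α) < s) : 1 < s ^ α / g * D := by
  rw [one_div, Real.rpow_inv_lt_iff_of_pos (by positivity) hs hα, div_lt_iff₀ hD] at h
  rwa [div_mul_eq_mul_div, one_lt_div hg]

lemma div_sq_mul_lt_of_lt_rpow_one_div {g L M α s : ℝ} (hg : 0 < g) (hL : 0 ≤ L) (hM : 0 < M)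
    (hα : 0 < α) (hs : 0 ≤ s) (h : s < (L * g ^ 2 / M) ^ (1 / (2 * α))) :
    (s ^ α / g) ^ 2 * M < L := by
  rw [one_div, Real.lt_rpow_inv_iff_of_pos hs (by positivity) (by positivity), mul_comm,
    Real.rpow_mul hs, Real.rpow_two, lt_div_iff₀ hM] at h
  rw [div_pow, div_mul_eq_mul_div, div_lt_iff₀ (by positivity)]
  linarith

theorem E2_quadratic_roots_in_unit_disk_general
    (r K lam mu α s h A B : ℝ)
    (hr : 0 < r) (hK : 0 < K) (hlam : 0 < lam) (hmu : 0 < mu)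
    (hα0 : 0 < α) (hs : 0 < s)
    (hh : h = s ^ α / (α * Real.Gamma α))
    (hR0 : mu < lam * K)
    (hA : A = h * r * mu / (lam * K) - 1)
    (hB : B = h ^ 2 * r * mu * (lam * K - mu) / (lam * K))
    (hs5 : (α * Real.Gamma α / (lam * K - mu)) ^ (1 / α) < s)
    (hs7 : s < (lam * K * (α * Real.Gamma α) ^ 2 / (mu * r * (lam * K - mu))) ^ (1 / (2 * α))) :
    ∀ ξ : ℂ, ξ ^ 2 + (A : ℂ) * ξ + (B : ℂ) = 0 → ‖ξ‖ < 1 := by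
  have hg : 0 < α * Real.Gamma α := mul_pos hα0 (Real.Gamma_pos_of_pos hα0)
  have hLK : 0 < lam * K := mul_pos hlam hK
  have hD : 0 < lam * K - mu := sub_pos.2 hR0
  have hgain : 1 < h * (lam * K - mu) := by
    rw [hh]
    exact one_lt_div_mul_of_rpow_one_div_lt hg hD hα0 hs.le hs5
  have hsq : h ^ 2 * (mu * r * (lam * K - mu)) < lam * K := by
    rw [hh]
    exact div_sq_mul_lt_of_lt_rpow_one_div hg hLK.le (by positivity) hα0 hs.le hs7
  set c := h * r * mu / (lam * K) with hc
  have hc0 : 0 < c := by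
    have : 0 < h := by rw [hh]; positivity
    positivity
  have hBc : B = c * (h * (lam * K - mu)) := by rw [hB, hc]; ring
  have hB1 : B < 1 := by
    rw [hB, div_lt_one hLK]
    linarith
  have hAB : |A| < 1 + B := by
    rw [abs_lt, hA, hBc]
    constructor <;> nlinarith
  exact fun ξ hξ => Complex.norm_lt_one_of_quadratic_root hB1 hAB hξ

/-- Jury criterion for the quadratic factor at the planar fixed point `E₂`:
assume `λK > μ`, `A = hrμ/(λK) − 1`, `B = h²rμ(λK − μ)/(λK)` with
`h = s^α/(αΓ(α))`. If `s₅ < s < s₇` with `s₅ = (αΓ(α)/(λK − μ))^{1/α}` and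
`s₇ = (λK(αΓ(α))²/(μr(λK − μ)))^{1/(2α)}`, then both complex roots of
`ξ² + Aξ + B = 0` satisfy `|ξ| < 1`. -/
theorem E2_quadratic_roots_in_unit_disk
    (r K lam mu α s h A B : ℝ)
    (hr : 0 < r) (hK : 0 < K) (hlam : 0 < lam) (hmu : 0 < mu)
    (hα0 : 0 < α) (hα1 : α ≤ 1) (hs : 0 < s)
    (hh : h = s ^ α / (α * Real.Gamma α))
    (hR0 : mu < lam * K)
    (hA : A = h * r * mu / (lam * K) - 1)
    (hB : B = h ^ 2 * r * mu * (lam * K - mu) / (lam * K))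
    (hs5 : (α * Real.Gamma α / (lam * K - mu)) ^ (1 / α) < s)
    (hs7 : s < (lam * K * (α * Real.Gamma α) ^ 2 / (mu * r * (lam * K - mu))) ^ (1 / (2 * α))) :
    ∀ ξ : ℂ, ξ ^ 2 + (A : ℂ) * ξ + (B : ℂ) = 0 → ‖ξ‖ < 1 :=
  E2_quadratic_roots_in_unit_disk_general r K lam mu α s h A B hr hK hlam hmu hα0 hs hh hR0 hA hB
    hs5 hs7
end

section
/- Assume R₀ := λK/μ > 1 and d > d₁, where d₁ := θr(λK − μ)/(aλ(λK + r) + r(λK − μ)). If s₅ < s < min{s₆, s₇}, where s₅ := (αΓ(α)/(λK − μ))^{1/α}, s₆ := (2αΓ(α)/(d − d₁))^{1/α}, and s₇ := (λK(αΓ(α))²/(μr(λK − μ)))^{1/(2α)}, then all three eigenvalues of the matrix M = [[1 − h·rμ/(λK), −h·μ(r + λK)/(λK), 0], [h·r(λK − μ)/(λK + r), 0, −h·mr(λK − μ)/(aλ(λK + r) + r(λK − μ))], [0, 0, 1 + h·(d₁ − d)]] have modulus strictly less than 1; hence the planar fixed point E₂ is locally asymptotically stable. -/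
/-!
The Jacobian at `E₂` is block triangular, so its characteristic polynomial splits as
`(ξ - c) (ξ² + A ξ + B)` with `c = 1 + h (d₁ - d)`. The window `s₅ < s < min s₆ s₇` translates
into `1 < h (λK - μ)`, `h (d - d₁) < 2` and `h² μ r (λK - μ) < λK`. The middle bound gives
`|c| < 1`; the last gives `B < 1` and, combined with the first, `h r μ < λK`, whence
`|A| < 1 + B`. These are the Jury conditions placing both roots of the quadratic factor in the
open unit disc.
-/

open Polynomial

theorem Matrix.charpoly_fin_three_of_apply_two_zero_of_apply_two_one {R : Type*} [CommRing R]
    (N : Matrix (Fin 3) (Fin 3) R) (h₀ : N 2 0 = 0) (h₁ : N 2 1 = 0) :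
    N.charpoly = (X - C (N 2 2)) *
      (X ^ 2 - C (N 0 0 + N 1 1) * X + C (N 0 0 * N 1 1 - N 0 1 * N 1 0)) := by
  rw [Matrix.charpoly, Matrix.det_fin_three]
  simp only [charmatrix_apply_eq, charmatrix_apply_ne, ne_eq, Fin.reduceEq, not_false_eq_true,
    h₀, h₁, map_add, map_sub, map_mul, map_zero]
  ring

theorem Complex.norm_lt_one_of_sq_add_mul_add_eq_zero {A B : ℝ} (hB : B < 1) (hA : |A| < 1 + B)
    {ξ : ℂ} (hξ : ξ ^ 2 + A * ξ + B = 0) : ‖ξ‖ < 1 := by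
  obtain ⟨hA₁, hA₂⟩ := abs_lt.mp hA
  have hre : ξ.re ^ 2 - ξ.im ^ 2 + A * ξ.re + B = 0 := by
    simpa [pow_two] using congrArg Complex.re hξ
  have him : ξ.im * (2 * ξ.re + A) = 0 := by
    have := congrArg Complex.im hξ
    simp only [pow_two, Complex.add_im, Complex.mul_im, Complex.ofReal_re, Complex.ofReal_im,
      zero_mul, add_zero, Complex.zero_im] at this
    linear_combination this
  -- A real root is trapped in `(-1, 1)`, where the quadratic is positive at `±1` and its vertex
  -- `-A/2` lies in between; a non-real root has real part `-A/2`, and then `‖ξ‖² = B`.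
  suffices ‖ξ‖ ^ 2 < 1 by nlinarith [norm_nonneg ξ]
  rw [Complex.sq_norm, Complex.normSq_apply]
  rcases mul_eq_zero.mp him with hreal | hvertex
  · have hroot : ξ.re ^ 2 + A * ξ.re + B = 0 := by simpa [hreal] using hre
    have hlt : ξ.re < 1 := by
      by_contra! hge
      nlinarith [mul_nonneg (sub_nonneg.2 hge) (show 0 ≤ ξ.re + 1 + A by linarith)]
    have hgt : -1 < ξ.re := by
      by_contra! hle
      nlinarith [mul_nonneg (neg_nonneg.2 (sub_nonpos.2 hle)) (show 0 ≤ 1 - A - ξ.re by linarith)]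
    rw [hreal]
    nlinarith
  · nlinarith

theorem Complex.norm_lt_one_of_isRoot_map_X_sub_C_mul_quadratic {A B c : ℝ} (hc : |c| < 1)
    (hB : B < 1) (hA : |A| < 1 + B) {ξ : ℂ}
    (hξ : (((X - C c) * (X ^ 2 + C A * X + C B)).map Complex.ofRealHom).IsRoot ξ) :
    ‖ξ‖ < 1 := by
  simp only [IsRoot.def, Polynomial.map_mul, Polynomial.map_sub, Polynomial.map_add,
    Polynomial.map_pow, Polynomial.map_X, Polynomial.map_C, eval_mul, eval_sub, eval_add, eval_pow,
    eval_X, eval_C, Complex.ofRealHom_eq_coe, mul_eq_zero, sub_eq_zero] at hξ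
  rcases hξ with rfl | hquad
  · simpa using hc
  · exact Complex.norm_lt_one_of_sq_add_mul_add_eq_zero hB hA hquad

section StepSize

variable {s α G c : ℝ}

theorem Real.one_lt_rpow_div_mul_of_rpow_inv_lt (hs : 0 < s) (hα : 0 < α) (hG : 0 < G)
    (hc : 0 < c) (h : (G / c) ^ (1 / α) < s) : 1 < s ^ α / G * c := by
  rw [one_div, Real.rpow_inv_lt_iff_of_pos (by positivity) hs.le hα, div_lt_iff₀ hc] at h
  rwa [div_mul_eq_mul_div, one_lt_div hG]

theorem Real.rpow_div_mul_lt_of_lt_rpow_inv {k : ℝ} (hs : 0 < s) (hα : 0 < α) (hG : 0 < G)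
    (hc : 0 < c) (hk : 0 < k) (h : s < (k * G / c) ^ (1 / α)) : s ^ α / G * c < k := by
  rw [one_div, Real.lt_rpow_inv_iff_of_pos hs.le (by positivity) hα, lt_div_iff₀ hc] at h
  rwa [div_mul_eq_mul_div, div_lt_iff₀ hG]

end StepSize

theorem jury_conditions_of_step_bounds {r μ κ h : ℝ} (hr : 0 < r) (hμ : 0 < μ) (hh : 0 < h)
    (h₁ : 1 < h * (κ - μ)) (h₂ : h ^ 2 * (μ * r * (κ - μ)) < κ) :
    h ^ 2 * r * μ * (κ - μ) / κ < 1 ∧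
      |h * r * μ / κ - 1| < 1 + h ^ 2 * r * μ * (κ - μ) / κ := by
  have hκ : 0 < κ := by nlinarith
  have hp : h * r * μ < κ := by nlinarith [mul_pos (mul_pos hh hr) hμ]
  have hB : 0 < h ^ 2 * r * μ * (κ - μ) / κ := by
    have : 0 < κ - μ := by nlinarith
    positivity
  refine ⟨by rw [div_lt_one hκ]; linarith, abs_lt.mpr ⟨?_, ?_⟩⟩
  · have : 0 < h * r * μ / κ := by positivity
    linarith
  · have : h * r * μ / κ < 1 := (div_lt_one hκ).mpr hp
    linarith

noncomputable def jacobianE2 (r K lam m mu a h d₁ d : ℝ) : Matrix (Fin 3) (Fin 3) ℝ :=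
  !![1 - h * r * mu / (lam * K), -(h * mu * (r + lam * K) / (lam * K)), 0;
     h * r * (lam * K - mu) / (lam * K + r), 0,
       -(h * m * r * (lam * K - mu) / (a * lam * (lam * K + r) + r * (lam * K - mu)));
     0, 0, 1 + h * (d₁ - d)]

theorem charpoly_jacobianE2 {r K lam m mu a h d₁ d : ℝ} (hκr : lam * K + r ≠ 0) :
    (jacobianE2 r K lam m mu a h d₁ d).charpoly = (X - C (1 + h * (d₁ - d))) * (X ^ 2 +
      C (h * r * mu / (lam * K) - 1) * X + C (h ^ 2 * r * mu * (lam * K - mu) / (lam * K))) := by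
  rw [Matrix.charpoly_fin_three_of_apply_two_zero_of_apply_two_one _ rfl rfl]
  set J := jacobianE2 r K lam m mu a h d₁ d
  have htrace : J 0 0 + J 1 1 = -(h * r * mu / (lam * K) - 1) := by
    simp [J, jacobianE2]
  have hdet : J 0 0 * J 1 1 - J 0 1 * J 1 0 = h ^ 2 * r * mu * (lam * K - mu) / (lam * K) := by
    simp only [J, jacobianE2, Matrix.of_apply, Matrix.cons_val', Matrix.cons_val_zero,
      Matrix.cons_val_fin_one, Matrix.cons_val_one, mul_zero, neg_mul, sub_neg_eq_add, zero_add]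
    field_simp
    ring
  have h22 : J 2 2 = 1 + h * (d₁ - d) := rfl
  rw [htrace, hdet, h22, map_neg]
  ring

theorem E2_locally_asymptotically_stable_general
    (r K lam m mu a d α s h d₁ : ℝ)
    (hr : 0 < r) (hmu : 0 < mu)
    (hα0 : 0 < α) (hs : 0 < s)
    (hh : h = s ^ α / (α * Real.Gamma α))
    (hR0 : 1 < lam * K / mu)
    (hdd₁ : d₁ < d)
    (hs5 : (α * Real.Gamma α / (lam * K - mu)) ^ (1 / α) < s)
    (hsb : s < min ((2 * α * Real.Gamma α / (d - d₁)) ^ (1 / α))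
        ((lam * K * (α * Real.Gamma α) ^ 2 / (mu * r * (lam * K - mu))) ^ (1 / (2 * α))))
    (M : Matrix (Fin 3) (Fin 3) ℝ)
    (hM : M = !![1 - h * r * mu / (lam * K), -(h * mu * (r + lam * K) / (lam * K)), 0;
                 h * r * (lam * K - mu) / (lam * K + r), 0,
                   -(h * m * r * (lam * K - mu) / (a * lam * (lam * K + r) + r * (lam * K - mu)));
                 0, 0, 1 + h * (d₁ - d)]) :
    ∀ ξ : ℂ, (M.map Complex.ofReal).charpoly.IsRoot ξ → ‖ξ‖ < 1 := by
  obtain rfl : M = jacobianE2 r K lam m mu a h d₁ d := hM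
  obtain ⟨hs6, hs7⟩ := lt_min_iff.mp hsb
  have hG : 0 < α * Real.Gamma α := mul_pos hα0 (Real.Gamma_pos_of_pos hα0)
  have hκμ : 0 < lam * K - mu := by linarith [(one_lt_div hmu).mp hR0]
  have hh₀ : 0 < h := by rw [hh]; positivity
  have hh₅ : 1 < h * (lam * K - mu) := by
    rw [hh]; exact Real.one_lt_rpow_div_mul_of_rpow_inv_lt hs hα0 hG hκμ hs5
  have hh₆ : h * (d - d₁) < 2 := by
    rw [mul_assoc] at hs6
    rw [hh]; exact Real.rpow_div_mul_lt_of_lt_rpow_inv hs hα0 hG (sub_pos.mpr hdd₁) two_pos hs6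
  have hh₇ : h ^ 2 * (mu * r * (lam * K - mu)) < lam * K := by
    have := Real.rpow_div_mul_lt_of_lt_rpow_inv hs (by positivity) (pow_pos hG 2) (by positivity)
      (by linarith) hs7
    rwa [mul_comm 2 α, Real.rpow_mul hs.le, Real.rpow_two, ← div_pow, ← hh] at this
  obtain ⟨hB, hA⟩ := jury_conditions_of_step_bounds hr hmu hh₀ hh₅ hh₇
  have hc : |1 + h * (d₁ - d)| < 1 := abs_lt.mpr ⟨by nlinarith, by nlinarith⟩
  intro ξ hξ
  rw [show (Complex.ofReal : ℝ → ℂ) = Complex.ofRealHom from rfl, Matrix.charpoly_map,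
    charpoly_jacobianE2 (by linarith)] at hξ
  exact Complex.norm_lt_one_of_isRoot_map_X_sub_C_mul_quadratic hc hB hA hξ

/-- Local asymptotic stability of the planar fixed point `E₂`: assume
`R₀ = λK/μ > 1` and `d > d₁ = θr(λK − μ)/(aλ(λK + r) + r(λK − μ))`. If
`s₅ < s < min{s₆, s₇}` with `s₅ = (αΓ(α)/(λK − μ))^{1/α}`,
`s₆ = (2αΓ(α)/(d − d₁))^{1/α}`,
`s₇ = (λK(αΓ(α))²/(μr(λK − μ)))^{1/(2α)}`, then all three (complex)
eigenvalues of the Jacobian matrix `M` at `E₂` have modulus strictly less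
than `1`. -/
theorem E2_locally_asymptotically_stable
    (r K lam m mu a th d α s h d₁ : ℝ)
    (hr : 0 < r) (hK : 0 < K) (hlam : 0 < lam) (hm : 0 < m) (hmu : 0 < mu)
    (ha : 0 < a) (hth : 0 < th) (hd : 0 < d)
    (hα0 : 0 < α) (hα1 : α ≤ 1) (hs : 0 < s)
    (hh : h = s ^ α / (α * Real.Gamma α))
    (hR0 : 1 < lam * K / mu)
    (hd₁ : d₁ = th * r * (lam * K - mu) / (a * lam * (lam * K + r) + r * (lam * K - mu)))
    (hdd₁ : d₁ < d)
    (hs5 : (α * Real.Gamma α / (lam * K - mu)) ^ (1 / α) < s)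
    (hsb : s < min ((2 * α * Real.Gamma α / (d - d₁)) ^ (1 / α))
        ((lam * K * (α * Real.Gamma α) ^ 2 / (mu * r * (lam * K - mu))) ^ (1 / (2 * α))))
    (M : Matrix (Fin 3) (Fin 3) ℝ)
    (hM : M = !![1 - h * r * mu / (lam * K), -(h * mu * (r + lam * K) / (lam * K)), 0;
                 h * r * (lam * K - mu) / (lam * K + r), 0,
                   -(h * m * r * (lam * K - mu) / (a * lam * (lam * K + r) + r * (lam * K - mu)));
                 0, 0, 1 + h * (d₁ - d)]) :
    ∀ ξ : ℂ, (M.map Complex.ofReal).charpoly.IsRoot ξ → ‖ξ‖ < 1 :=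
  E2_locally_asymptotically_stable_general r K lam m mu a d α s h d₁ hr hmu hα0 hs hh hR0 hdd₁ hs5
    hsb M hM
end
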